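/- For t ∈ [0,1] and |x| small enough, log(1+(e^x−1)t) = xt + (x²/2)·t(1−t) + (x³/6)·t(1−t)·r(t,x) where |r(t,x)| is bounded uniformly in t ∈ [0,1] and |x| ≤ 1. -/

import Mathlib

/-!
Fix `x` and put `a = exp x - 1`. As a function of `s ∈ [0, 1]`,
`G s = log (1 + a s) - x s - x² / 2 · s (1 - s)` vanishes at both endpoints, and
`G'' s = x² - a² / (1 + a s)² = O(|x|³)` because `a = x + O(x²)` and `1 + a s ≥ 1 / 3`.
A function vanishing at both ends of an interval with `|G''| ≤ M` is bounded by `M / 2` times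
the product of the distances to the ends: adding that parabola to `G` gives a concave function,
which lies above its zero boundary values. Hence `|G t| ≤ C |x|³ t (1 - t)`, and `r` is the
quotient.
-/

open Set Real

section SecondDerivative

variable {f f' f'' : ℝ → ℝ} {a b M t : ℝ}

theorem neg_le_of_hasDerivAt2_le_of_eq_zero
    (hf : ∀ s ∈ Icc a b, HasDerivAt f (f' s) s)
    (hf' : ∀ s ∈ Icc a b, HasDerivAt f' (f'' s) s)
    (hM : ∀ s ∈ Icc a b, f'' s ≤ M) (ha : f a = 0) (hb : f b = 0) (ht : t ∈ Icc a b) :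
    -(M / 2 * ((t - a) * (b - t))) ≤ f t := by
  set φ : ℝ → ℝ := fun s => f s + M / 2 * ((s - a) * (b - s))
  have hφ : ∀ s ∈ Icc a b, HasDerivAt φ (f' s + M / 2 * (a + b - 2 * s)) s := by
    intro s hs
    have hq : HasDerivAt (fun s => (s - a) * (b - s)) (a + b - 2 * s) s :=
      (((hasDerivAt_id' s).sub_const a).mul ((hasDerivAt_id' s).const_sub b)).congr_deriv
        (by ring)
    exact (hf s hs).add (hq.const_mul _)
  have hφ' : ∀ s ∈ Icc a b,
      HasDerivAt (fun s => f' s + M / 2 * (a + b - 2 * s)) (f'' s - M) s := by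
    intro s hs
    have hl : HasDerivAt (fun s => M / 2 * (a + b - 2 * s)) (-M) s :=
      ((((hasDerivAt_id' s).const_mul 2).const_sub (a + b)).const_mul (M / 2)).congr_deriv
        (by ring)
    exact ((hf' s hs).add hl).congr_deriv (by ring)
  have hconc : ConcaveOn ℝ (Icc a b) φ :=
    concaveOn_of_hasDerivWithinAt2_nonpos (convex_Icc a b)
      (fun s hs => (hφ s hs).continuousAt.continuousWithinAt)
      (fun s hs => (hφ s (interior_subset hs)).hasDerivWithinAt)
      (fun s hs => (hφ' s (interior_subset hs)).hasDerivWithinAt)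
      (fun s hs => sub_nonpos.2 (hM s (interior_subset hs)))
  have hab : a ≤ b := ht.1.trans ht.2
  have hmin := hconc.ge_on_segment (left_mem_Icc.2 hab) (right_mem_Icc.2 hab)
    (by rwa [segment_eq_Icc hab])
  simp only [φ, ha, hb, sub_self, zero_mul, mul_zero, add_zero, min_self] at hmin
  linarith

theorem abs_le_of_abs_hasDerivAt2_le_of_eq_zero
    (hf : ∀ s ∈ Icc a b, HasDerivAt f (f' s) s)
    (hf' : ∀ s ∈ Icc a b, HasDerivAt f' (f'' s) s)
    (hM : ∀ s ∈ Icc a b, |f'' s| ≤ M) (ha : f a = 0) (hb : f b = 0) (ht : t ∈ Icc a b) :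
    |f t| ≤ M / 2 * ((t - a) * (b - t)) := by
  have lower := neg_le_of_hasDerivAt2_le_of_eq_zero hf hf'
    (fun s hs => (abs_le.1 (hM s hs)).2) ha hb ht
  have upper := neg_le_of_hasDerivAt2_le_of_eq_zero (f := -f) (f' := -f') (f'' := -f'')
    (fun s hs => (hf s hs).neg) (fun s hs => (hf' s hs).neg)
    (fun s hs => neg_le.1 (abs_le.1 (hM s hs)).1) (by simp [ha]) (by simp [hb]) ht
  rw [Pi.neg_apply] at upper
  exact abs_le.2 ⟨lower, by linarith⟩

end SecondDerivative

theorem exists_eq_mul_abs_le {y c C : ℝ} (hC : 0 ≤ C) (h : |y| ≤ C * |c|) :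
    ∃ r, y = c * r ∧ |r| ≤ C := by
  rcases eq_or_ne c 0 with rfl | hc
  · exact ⟨0, by simpa using h, by simpa using hC⟩
  · refine ⟨y / c, (mul_div_cancel₀ y hc).symm, ?_⟩
    rwa [abs_div, div_le_iff₀ (abs_pos.2 hc)]

section LogMix

variable {a x s t : ℝ}

theorem hasDerivAt_log_one_add_mul_sub (hs : 1 + a * s ≠ 0) :
    HasDerivAt (fun s => log (1 + a * s) - x * s - x ^ 2 / 2 * (s * (1 - s)))
      (a / (1 + a * s) - x - x ^ 2 / 2 * (1 - 2 * s)) s := by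
  have hlog := (((hasDerivAt_id' s).const_mul a).const_add 1).log hs
  have hq : HasDerivAt (fun s => s * (1 - s)) (1 - 2 * s) s :=
    ((hasDerivAt_id' s).mul ((hasDerivAt_id' s).const_sub 1)).congr_deriv (by ring)
  exact ((hlog.sub ((hasDerivAt_id' s).const_mul x)).sub (hq.const_mul (x ^ 2 / 2))).congr_deriv
    (by ring)

theorem hasDerivAt_div_one_add_mul_sub (hs : 1 + a * s ≠ 0) :
    HasDerivAt (fun s => a / (1 + a * s) - x - x ^ 2 / 2 * (1 - 2 * s))
      (x ^ 2 - a ^ 2 / (1 + a * s) ^ 2) s := by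
  have hdiv := (hasDerivAt_const s a).div (((hasDerivAt_id' s).const_mul a).const_add 1) hs
  have hl : HasDerivAt (fun s => x ^ 2 / 2 * (1 - 2 * s)) (-x ^ 2) s :=
    ((((hasDerivAt_id' s).const_mul 2).const_sub 1).const_mul (x ^ 2 / 2)).congr_deriv (by ring)
  exact ((hdiv.sub_const x).sub hl).congr_deriv (by ring)

theorem one_third_le_one_add_exp_sub_one_mul (hx : -1 ≤ x) (hs : s ∈ Icc (0 : ℝ) 1) :
    1 / 3 ≤ 1 + (exp x - 1) * s := by
  -- a convex combination of `1` and `exp x ≥ exp (-1) > 1 / 3`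
  have he : 1 / 3 < exp x := (by norm_num : (1 : ℝ) / 3 < 0.36787944116).trans
    (exp_neg_one_gt_d9.trans_le (exp_le_exp.2 hx))
  nlinarith [mul_le_mul_of_nonneg_left he.le hs.1, hs.2]

theorem abs_sq_sub_exp_sub_one_div_sq_le (hx : |x| ≤ 1) (hs : s ∈ Icc (0 : ℝ) 1) :
    |x ^ 2 - (exp x - 1) ^ 2 / (1 + (exp x - 1) * s) ^ 2| ≤ 135 * |x| ^ 3 := by
  set a := exp x - 1
  set u := 1 + a * s with hu_def
  have hu : 1 / 3 ≤ u := one_third_le_one_add_exp_sub_one_mul (abs_le.1 hx).1 hs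
  have ha : |a| ≤ 2 * |x| := abs_exp_sub_one_le hx
  have hax : |a - x| ≤ x ^ 2 := abs_exp_sub_one_sub_id_le hx
  have has : |a * s| ≤ 2 * |x| := by
    rw [abs_mul, abs_of_nonneg hs.1]; nlinarith [abs_nonneg a, hs.1, hs.2]
  have hminus : |x * u - a| ≤ 3 * |x| ^ 2 := by
    calc |x * u - a| = |x * (a * s) - (a - x)| := by rw [hu_def]; ring_nf
      _ ≤ |x| * |a * s| + |a - x| := by rw [← abs_mul]; exact abs_sub _ _
      _ ≤ 3 * |x| ^ 2 := by nlinarith [abs_nonneg x, sq_abs x]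
  have hu3 : |u| ≤ 3 :=
    (abs_add_le 1 (a * s)).trans (by rw [abs_one]; linarith [abs_le.1 hx])
  have hplus : |x * u + a| ≤ 5 * |x| := by
    calc |x * u + a| ≤ |x| * |u| + |a| := by rw [← abs_mul]; exact abs_add_le _ _
      _ ≤ |x| * 3 + 2 * |x| := by gcongr
      _ = 5 * |x| := by ring
  have hfactor : x ^ 2 - a ^ 2 / u ^ 2 = (x * u - a) * (x * u + a) / u ^ 2 := by
    field_simp; ring
  calc |x ^ 2 - a ^ 2 / u ^ 2| = |x * u - a| * |x * u + a| / u ^ 2 := by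
        rw [hfactor, abs_div, abs_mul, abs_of_pos (pow_pos (by linarith : (0 : ℝ) < u) 2)]
    _ ≤ 3 * |x| ^ 2 * (5 * |x|) / (1 / 3) ^ 2 := by gcongr
    _ = 135 * |x| ^ 3 := by ring

theorem abs_log_one_add_exp_sub_one_mul_sub_le (hx : |x| ≤ 1) (ht : t ∈ Icc (0 : ℝ) 1) :
    |log (1 + (exp x - 1) * t) - x * t - x ^ 2 / 2 * (t * (1 - t))|
      ≤ 135 * |x| ^ 3 / 2 * (t * (1 - t)) := by
  have hpos : ∀ s ∈ Icc (0 : ℝ) 1, 1 + (exp x - 1) * s ≠ 0 := fun s hs =>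
    ((by norm_num : (0 : ℝ) < 1 / 3).trans_le
      (one_third_le_one_add_exp_sub_one_mul (abs_le.1 hx).1 hs)).ne'
  simpa using abs_le_of_abs_hasDerivAt2_le_of_eq_zero
    (fun s hs => hasDerivAt_log_one_add_mul_sub (x := x) (hpos s hs))
    (fun s hs => hasDerivAt_div_one_add_mul_sub (hpos s hs))
    (fun s hs => abs_sq_sub_exp_sub_one_div_sq_le hx hs)
    (by simp) (by simp) ht

end LogMix

/-- there is a constant `C` such that for every `t ∈ [0,1]` and `|x| ≤ 1`,
`log(1+(e^x−1)t) = xt + (x²/2)t(1−t) + (x³/6)t(1−t)·r(t,x)` with `|r(t,x)| ≤ C`. -/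
theorem stmt7 :
    ∃ C : ℝ, ∀ t ∈ Set.Icc (0:ℝ) 1, ∀ x : ℝ, |x| ≤ 1 →
      ∃ r : ℝ, Real.log (1 + (Real.exp x - 1) * t)
          = x * t + (x ^ 2 / 2) * (t * (1 - t)) + (x ^ 3 / 6) * (t * (1 - t)) * r
        ∧ |r| ≤ C := by
  refine ⟨405, fun t ht x hx => ?_⟩
  have htt : 0 ≤ t * (1 - t) := mul_nonneg ht.1 (sub_nonneg.2 ht.2)
  have hrem : |log (1 + (exp x - 1) * t) - x * t - x ^ 2 / 2 * (t * (1 - t))|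
      ≤ 405 * |x ^ 3 / 6 * (t * (1 - t))| := by
    rw [abs_mul, abs_div, abs_pow, abs_of_nonneg htt, abs_of_pos (by norm_num : (0 : ℝ) < 6)]
    linarith [abs_log_one_add_exp_sub_one_mul_sub_le hx ht]
  obtain ⟨r, hr, hrC⟩ := exists_eq_mul_abs_le (by norm_num) hrem
  exact ⟨r, by linarith, hrC⟩
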